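/- The limit of γ(S) = 1 + (D/(4S)) · log(1 − (D²/((D−1)(D+2))) · ((1 − √(1 − g^D))/(1 + √(1 − g^D))) · (1 − g)) with g = exp(−2S/D), as S → 0⁺, equals (D(D+2) − 4) / (2(D−1)(D+2)), and this limit lies in the interval [1/2, 5/9] for all integers D ≥ 2. -/

import Mathlib

/-!
Write `g = exp(−2S/D)` and `u(S) = c · r(S) · (1 − g)` for the argument of the logarithm, where
`c = D²/((D−1)(D+2))` and `r = (1 − √(1 − g^D))/(1 + √(1 − g^D))`. As `S → 0⁺` we have `g → 1`, so
`r → 1` and `(1 − g)/S → 2/D`; hence `u/S → 2c/D` and `u → 0⁺`. Since `log(1 − u)/u → −1`,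
`γ(S) = 1 + (D/4) · (log(1 − u)/u) · (u/S) → 1 − c/2 = (D(D+2) − 4)/(2(D−1)(D+2))`.
The bounds `1/2 ≤ 1 − c/2 ≤ 5/9` reduce to `D ≥ 2` and `(D − 4)² ≥ 0`.
-/

/-- The convergence-rate function
`γ(S) = 1 + (D/(4S)) · log(1 − (D²/((D−1)(D+2))) · ((1−√(1−g^D))/(1+√(1−g^D))) · (1−g))`
with `g = exp(−2S/D)`. -/
noncomputable def gam (D : ℕ) (S : ℝ) : ℝ :=
  1 + ((D : ℝ) / (4 * S)) * Real.log (1 -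
    ((D : ℝ) ^ 2 / (((D : ℝ) - 1) * ((D : ℝ) + 2))) *
      ((1 - Real.sqrt (1 - Real.exp (-2 * S / D) ^ D)) /
        (1 + Real.sqrt (1 - Real.exp (-2 * S / D) ^ D))) *
      (1 - Real.exp (-2 * S / D)))

open Filter Topology Real

lemma HasDerivAt.tendsto_div_self_nhdsNE_zero {f : ℝ → ℝ} {f' : ℝ} (hf : HasDerivAt f f' 0)
    (hf0 : f 0 = 0) : Tendsto (fun x => f x / x) (𝓝[≠] 0) (𝓝 f') := by
  simpa [hf0, div_eq_inv_mul] using hf.tendsto_slope_zero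

lemma tendsto_log_one_sub_div_self : Tendsto (fun x => log (1 - x) / x) (𝓝[≠] 0) (𝓝 (-1)) := by
  have hderiv : HasDerivAt (fun x => log (1 - x)) (-1) 0 := by
    simpa using ((hasDerivAt_id (0 : ℝ)).const_sub 1).log (by norm_num)
  exact hderiv.tendsto_div_self_nhdsNE_zero (by simp)

lemma tendsto_one_sub_exp_mul_div_self (a : ℝ) :
    Tendsto (fun x => (1 - exp (a * x)) / x) (𝓝[≠] 0) (𝓝 (-a)) := by
  have hderiv : HasDerivAt (fun x => 1 - exp (a * x)) (-a) 0 := by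
    simpa using (((hasDerivAt_id (0 : ℝ)).const_mul a).exp).const_sub 1
  exact hderiv.tendsto_div_self_nhdsNE_zero (by simp)

lemma Filter.Tendsto.log_one_sub_div {α : Type*} {l : Filter α} {u v : α → ℝ} {L : ℝ}
    (hu : Tendsto u l (𝓝[≠] 0)) (huv : Tendsto (fun x => u x / v x) l (𝓝 L)) :
    Tendsto (fun x => Real.log (1 - u x) / v x) l (𝓝 (-L)) := by
  have hlog := (tendsto_log_one_sub_div_self.comp hu).mul huv
  rw [neg_one_mul] at hlog
  refine hlog.congr' ?_
  filter_upwards [hu self_mem_nhdsWithin] with x hx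
  exact div_mul_div_cancel₀ hx

lemma Filter.Tendsto.tendsto_nhdsNE_zero_of_div_self {u : ℝ → ℝ} {L : ℝ}
    (h : Tendsto (fun x => u x / x) (𝓝[>] 0) (𝓝 L)) (hu : ∀ᶠ x in 𝓝[>] 0, u x ≠ 0) :
    Tendsto u (𝓝[>] 0) (𝓝[≠] 0) := by
  refine tendsto_nhdsWithin_iff.2 ⟨?_, hu⟩
  have hprod := h.mul (tendsto_nhdsWithin_of_tendsto_nhds (tendsto_id (x := 𝓝 (0 : ℝ))))
  rw [mul_zero] at hprod
  refine hprod.congr' ?_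
  filter_upwards [self_mem_nhdsWithin] with x hx
  exact div_mul_cancel₀ _ (ne_of_gt hx)

lemma tendsto_one_sub_sqrt_div_one_add_sqrt :
    Tendsto (fun y => (1 - √(1 - y)) / (1 + √(1 - y))) (𝓝 1) (𝓝 1) := by
  have hcont : ContinuousAt (fun y => (1 - √(1 - y)) / (1 + √(1 - y))) 1 :=
    ContinuousAt.div (by fun_prop) (by fun_prop) (by norm_num)
  simpa using hcont.tendsto

lemma one_sub_sqrt_div_one_add_sqrt_pos {y : ℝ} (hy : 0 < y) :
    0 < (1 - √(1 - y)) / (1 + √(1 - y)) := by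
  have hsqrt : √(1 - y) < 1 := by
    rw [sqrt_lt' one_pos]
    linarith
  exact div_pos (by linarith) (by positivity)

lemma gam_limit_mem_Icc {d : ℝ} (hd : 2 ≤ d) :
    (d * (d + 2) - 4) / (2 * (d - 1) * (d + 2)) ∈ Set.Icc (1 / 2 : ℝ) (5 / 9) := by
  have hden : 0 < 2 * (d - 1) * (d + 2) := by nlinarith
  constructor
  · rw [le_div_iff₀ hden]
    nlinarith
  · rw [div_le_iff₀ hden]
    nlinarith [sq_nonneg (d - 4)]

/-- As `S → 0⁺`, `γ(S)` tends to `(D(D+2) − 4) / (2(D−1)(D+2))`, a value lying in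
`[1/2, 5/9]` for every integer `D ≥ 2`. -/
theorem gam_tendsto_limit (D : ℕ) (hD : 2 ≤ D) :
    Filter.Tendsto (gam D) (nhdsWithin 0 (Set.Ioi 0))
        (nhds (((D : ℝ) * ((D : ℝ) + 2) - 4) / (2 * ((D : ℝ) - 1) * ((D : ℝ) + 2)))) ∧
      ((D : ℝ) * ((D : ℝ) + 2) - 4) / (2 * ((D : ℝ) - 1) * ((D : ℝ) + 2)) ∈
        Set.Icc (1 / 2 : ℝ) (5 / 9) := by
  have hd : (2 : ℝ) ≤ D := by exact_mod_cast hD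
  refine ⟨?_, gam_limit_mem_Icc hd⟩
  set c : ℝ := (D : ℝ) ^ 2 / (((D : ℝ) - 1) * ((D : ℝ) + 2))
  set g : ℝ → ℝ := fun S => exp (-2 * S / D)
  set r : ℝ → ℝ := fun S => (1 - √(1 - g S ^ D)) / (1 + √(1 - g S ^ D))
  set u : ℝ → ℝ := fun S => c * r S * (1 - g S)
  have hg : Tendsto g (𝓝[>] 0) (𝓝 1) := by
    have hcont : Continuous g := by fun_prop
    simpa [g] using (hcont.tendsto 0).mono_left nhdsWithin_le_nhds
  have hr : Tendsto r (𝓝[>] 0) (𝓝 1) :=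
    tendsto_one_sub_sqrt_div_one_add_sqrt.comp (by simpa using hg.pow D)
  have hslope : Tendsto (fun S => (1 - g S) / S) (𝓝[>] 0) (𝓝 (2 / D)) := by
    have := (tendsto_one_sub_exp_mul_div_self (-2 / D)).mono_left (nhdsGT_le_nhdsNE 0)
    simpa [g, neg_div, mul_comm, mul_div_assoc] using this
  have huS : Tendsto (fun S => u S / S) (𝓝[>] 0) (𝓝 (c * 1 * (2 / D))) :=
    ((tendsto_const_nhds.mul hr).mul hslope).congr fun S => (mul_div_assoc _ _ _).symm
  have hu_pos : ∀ S > 0, 0 < u S := by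
    intro S hS
    have hg_pos : 0 < g S := exp_pos _
    have hg_lt : g S < 1 :=
      exp_lt_one_iff.2 (div_neg_of_neg_of_pos (by linarith) (by positivity))
    have hc : 0 < c := div_pos (by positivity) (by nlinarith)
    exact mul_pos (mul_pos hc (one_sub_sqrt_div_one_add_sqrt_pos (pow_pos hg_pos D)))
      (by linarith)
  have hu : Tendsto u (𝓝[>] 0) (𝓝[≠] 0) :=
    huS.tendsto_nhdsNE_zero_of_div_self
      (eventually_nhdsWithin_of_forall fun S hS => (hu_pos S hS).ne')
  have hlim := ((hu.log_one_sub_div huS).const_mul ((D : ℝ) / 4)).const_add 1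
  convert hlim using 2
  · simp only [gam, u, r, g, c]
    ring
  · have hd1 : (D : ℝ) - 1 ≠ 0 := by linarith
    simp only [c]
    field_simp
    ring
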